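/- arXiv:2303.08100 — 2 statements merged into one kernel-verified Lean document; each statement's English description precedes it below -/
import Mathlib

section
/- The discriminant of the n-th Taylor polynomial of the exponential function, f_n(x) = ∑_{k=0}^{n} x^k/k!, equals (-1)^{n(n-1)/2}·(n!)^n. -/
open Polynomial

/-- The discriminant of a polynomial over `ℚ`, via the product of squared differences of
its complex roots (monic convention). -/
noncomputable def polyDisc (f : Polynomial ℚ) : ℂ :=
  let l := ((f.map (algebraMap ℚ ℂ)).roots).toList
  ∏ q ∈ (Finset.range l.length ×ˢ Finset.range l.length).filter (fun q => q.1 < q.2),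
    (l.getD q.1 0 - l.getD q.2 0) ^ 2

/-! If `p` splits with roots `a 0, …, a (N-1)` and leading coefficient `c`, then
`∏ i, p'(a i) = c ^ N ∏ i, ∏ j ≠ i, (a i - a j)`, which is `c ^ N (-1) ^ (N(N-1)/2)` times the
discriminant. For `f_n` we have `f_n' = f_n - x ^ n / n!`, so `f_n'(r) = -r ^ n / n!` at each root,
and the roots multiply to `(-1) ^ n n!`; hence `∏ r, f_n'(r) = 1`. -/

open Finset Lagrange

open scoped Nat

theorem prod_filter_fst_lt_snd {M : Type*} [CommMonoid M] (N : ℕ) (f : ℕ → ℕ → M) :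
    ∏ q ∈ (range N ×ˢ range N).filter (fun q => q.1 < q.2), f q.1 q.2 =
      ∏ j ∈ range N, ∏ i ∈ range j, f i j := by
  rw [prod_filter, prod_product_right]
  refine prod_congr rfl fun j hj => ?_
  rw [← prod_filter]
  refine prod_congr (ext fun i => ?_) fun _ _ => rfl
  simp only [mem_filter, mem_range] at hj ⊢
  omega

theorem Multiset.prod_map_eq_prod_range_getD {α M : Type*} [CommMonoid M] (s : Multiset α)
    (d : α) (f : α → M) :
    (s.map f).prod = ∏ i ∈ Finset.range (card s), f (s.toList.getD i d) := by
  rw [← prod_map_toList, ← Fin.prod_univ_fun_getElem, ← length_toList,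
    ← Fin.prod_univ_eq_prod_range]
  exact prod_congr rfl fun i _ => by rw [List.getD_eq_getElem _ _ i.2]

theorem prod_eval_derivative_nodal_range {R : Type*} [CommRing R] (a : ℕ → R) (N : ℕ) :
    ∏ i ∈ range N, (derivative (nodal (range N) a)).eval (a i) =
      (-1) ^ (N * (N - 1) / 2) * ∏ j ∈ range N, ∏ i ∈ range j, (a i - a j) ^ 2 := by
  induction N with
  | zero => simp
  | succ N ih =>
    have hnodal : nodal (range (N + 1)) a = (X - C (a N)) * nodal (range N) a := by
      rw [range_add_one, nodal_insert_eq_nodal notMem_range_self]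
    have heval_lt : ∀ i ∈ range N, (derivative (nodal (range (N + 1)) a)).eval (a i) =
        (a i - a N) * (derivative (nodal (range N) a)).eval (a i) := fun i hi => by
      simp [hnodal, eval_nodal_at_node hi]
    have heval_last : (derivative (nodal (range (N + 1)) a)).eval (a N) =
        (-1) ^ N * ∏ i ∈ range N, (a i - a N) := by
      simpa [hnodal, eval_nodal] using prod_neg (s := range N) fun i => a i - a N
    rw [prod_range_succ, prod_congr rfl heval_lt, prod_mul_distrib, ih, heval_last,
      prod_range_succ _ N, Nat.triangle_succ, pow_add, prod_pow]
    ring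

noncomputable def expTaylor (K : Type*) [Field K] (n : ℕ) : K[X] :=
  ∑ k ∈ range (n + 1), C (k ! : K)⁻¹ * X ^ k

variable {K : Type*} [Field K]

theorem map_expTaylor {L : Type*} [Field L] (f : K →+* L) (n : ℕ) :
    (expTaylor K n).map f = expTaylor L n := by
  simp [expTaylor, Polynomial.map_sum]

theorem coeff_expTaylor (n m : ℕ) :
    (expTaylor K n).coeff m = if m ≤ n then (m ! : K)⁻¹ else 0 := by
  simp [expTaylor]

variable [CharZero K]

theorem natDegree_expTaylor (n : ℕ) : (expTaylor K n).natDegree = n :=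
  natDegree_eq_of_le_of_coeff_ne_zero
    (natDegree_le_iff_coeff_eq_zero.mpr fun m hm => by simp [coeff_expTaylor, not_le.mpr hm])
    (by simp [coeff_expTaylor, Nat.factorial_ne_zero])

theorem leadingCoeff_expTaylor (n : ℕ) : (expTaylor K n).leadingCoeff = (n ! : K)⁻¹ := by
  simp [leadingCoeff, natDegree_expTaylor, coeff_expTaylor]

theorem derivative_expTaylor (n : ℕ) :
    derivative (expTaylor K n) = expTaylor K n - C (n ! : K)⁻¹ * X ^ n := by
  have hterm (k : ℕ) :
      derivative (C ((k + 1)! : K)⁻¹ * X ^ (k + 1)) = C (k ! : K)⁻¹ * X ^ k := by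
    rw [derivative_C_mul_X_pow, Nat.add_sub_cancel, Nat.factorial_succ]
    congr 1
    push_cast
    field_simp
  rw [expTaylor, derivative_sum, sum_range_succ', sum_range_succ _ n]
  simp [hterm]

theorem prod_roots_eval_derivative_expTaylor {n : ℕ} (h : (expTaylor K n).Splits) :
    ((expTaylor K n).roots.map fun r => (derivative (expTaylor K n)).eval r).prod = 1 := by
  have heval_root : ∀ r ∈ (expTaylor K n).roots,
      (derivative (expTaylor K n)).eval r = -(n ! : K)⁻¹ * r ^ n := fun r hr => by
    simp [derivative_expTaylor, (isRoot_of_mem_roots hr).eq_zero]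
  have hcoeff_zero := h.coeff_zero_eq_leadingCoeff_mul_prod_roots
  rw [coeff_expTaylor, if_pos n.zero_le, Nat.factorial_zero, Nat.cast_one, inv_one,
    natDegree_expTaylor, leadingCoeff_expTaylor] at hcoeff_zero
  have hprod_roots : (n ! : K)⁻¹ * (expTaylor K n).roots.prod = (-1) ^ n := by
    have hsq : ((-1 : K) ^ n) ^ 2 = 1 := by simp [← pow_mul]
    linear_combination (-(-1) ^ n) * hcoeff_zero - ((n ! : K)⁻¹ * (expTaylor K n).roots.prod) * hsq
  rw [Multiset.map_congr rfl heval_root, Multiset.prod_map_mul, Multiset.map_const',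
    Multiset.prod_replicate, Multiset.prod_map_pow, Multiset.map_id', ← h.natDegree_eq_card_roots,
    natDegree_expTaylor, ← mul_pow, neg_mul, hprod_roots, ← neg_one_mul, ← pow_succ', ← pow_mul,
    mul_comm, (Nat.even_mul_succ_self n).neg_one_pow]

theorem polyDisc_mul_leadingCoeff_pow {f : ℚ[X]} {p : ℂ[X]} (hp : f.map (algebraMap ℚ ℂ) = p) :
    polyDisc f * p.leadingCoeff ^ p.natDegree =
      (-1) ^ (p.natDegree * (p.natDegree - 1) / 2) *
        (p.roots.map fun r => (derivative p).eval r).prod := by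
  have hsplit := IsAlgClosed.splits p
  have hcard : Multiset.card p.roots = p.natDegree := hsplit.natDegree_eq_card_roots.symm
  rw [Multiset.prod_map_eq_prod_range_getD _ 0, hcard]
  set N := p.natDegree
  set a : ℕ → ℂ := fun i => p.roots.toList.getD i 0
  have hdisc : polyDisc f = ∏ j ∈ range N, ∏ i ∈ range j, (a i - a j) ^ 2 := by
    rw [polyDisc, hp, Multiset.length_toList, hcard]
    exact prod_filter_fst_lt_snd N fun i j => (a i - a j) ^ 2
  have hnodal : C p.leadingCoeff * nodal (range N) a = p := by
    conv_rhs => rw [hsplit.eq_prod_roots, Multiset.prod_map_eq_prod_range_getD _ 0, hcard]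
    rfl
  have hderiv (i : ℕ) : (derivative p).eval (a i) =
      p.leadingCoeff * (derivative (nodal (range N) a)).eval (a i) := by
    conv_lhs => rw [← hnodal, derivative_C_mul, eval_mul, eval_C]
  change _ = _ * ∏ i ∈ range N, (derivative p).eval (a i)
  rw [hdisc, prod_congr rfl fun i _ => hderiv i, prod_mul_distrib, prod_const, card_range,
    prod_eval_derivative_nodal_range]
  have hsq : ((-1 : ℂ) ^ (N * (N - 1) / 2)) ^ 2 = 1 := by simp [← pow_mul]
  linear_combination (-(p.leadingCoeff ^ N * ∏ j ∈ range N, ∏ i ∈ range j, (a i - a j) ^ 2)) * hsq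

theorem disc_taylor_exp_general (n : ℕ) :
    polyDisc (∑ k ∈ Finset.range (n + 1), C ((k.factorial : ℚ))⁻¹ * X ^ k) =
      (-1) ^ (n * (n - 1) / 2) * ((n.factorial : ℂ)) ^ n := by
  have h := polyDisc_mul_leadingCoeff_pow (map_expTaylor (algebraMap ℚ ℂ) n)
  rw [natDegree_expTaylor, leadingCoeff_expTaylor,
    prod_roots_eval_derivative_expTaylor (IsAlgClosed.splits _), mul_one] at h
  change polyDisc (expTaylor ℚ n) = _
  rw [← h, mul_assoc, ← mul_pow, inv_mul_cancel₀ (Nat.cast_ne_zero.mpr n.factorial_ne_zero),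
    one_pow, mul_one]

/-- The discriminant of `f_n(x) = ∑ x^k/k!` is `(-1)^(n(n-1)/2) (n!)^n`. -/
theorem disc_taylor_exp (n : ℕ) (hn : 0 < n) :
    polyDisc (∑ k ∈ Finset.range (n + 1), C ((k.factorial : ℚ))⁻¹ * X ^ k) =
      (-1) ^ (n * (n - 1) / 2) * ((n.factorial : ℂ)) ^ n :=
  disc_taylor_exp_general n
end

section
/- Let n be a positive integer and p a prime with p ∤ n!. If K = ℚ(θ) where θ is a root of the irreducible polynomial f_n(x) = ∑_{k=0}^{n} (n!/k!)·x^k ∈ ℤ[x], then p does not divide the index [ℤ_K : ℤ[θ]]. -/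
open Polynomial NumberField

/-!
Since `θ` is integral with minimal polynomial `f_n`, the discriminant `d` of the power basis
`1, θ, …, θ^(n-1)` satisfies `d • ℤ_K ⊆ ℤ[θ]`; hence `ℤ_K/ℤ[θ]` is a finite group killed by `d`,
and by Cauchy's theorem every prime dividing the index divides `d`. As `f_n' = f_n - X^n`, we have
`f_n'(θ) = -θ^n`, and `N(θ) = ±n!` is read off the constant term, so `d = ±(n!)^n`.
-/

/-- The monic integer polynomial `n!` times the `n`-th Taylor polynomial of `exp`:
`f_n(x) = ∑_(k=0)^(n) (n!/k!) x^k`. -/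
noncomputable def fInt (n : ℕ) : Polynomial ℤ :=
  ∑ k ∈ Finset.range (n + 1), C ((n.factorial / k.factorial : ℕ) : ℤ) * X ^ k

/-- The index `[ℤ_K : ℤ[θ]]` of the order `ℤ[θ]` in the ring of integers of `K`. -/
noncomputable def subIdx {K : Type*} [Field K] [NumberField K] (θ : 𝓞 K) : ℕ :=
  (Subalgebra.toSubmodule (Algebra.adjoin ℤ ({θ} : Set (𝓞 K)))).toAddSubgroup.index

open scoped Nat

theorem Nat.factorial_div_succ_factorial_mul {n k : ℕ} (hk : k < n) :
    n ! / (k + 1)! * (k + 1) = n ! / k ! := by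
  obtain ⟨q, hq⟩ := Nat.factorial_dvd_factorial hk
  rw [hq, Nat.mul_div_cancel_left _ (Nat.factorial_pos _), Nat.factorial_succ, mul_right_comm,
    Nat.mul_div_cancel _ (Nat.factorial_pos k), mul_comm]

theorem AddSubgroup.prime_dvd_of_dvd_index_of_zsmul_mem {G : Type*} [AddCommGroup G]
    [AddGroup.FG G] {H : AddSubgroup G} {m : ℤ} (hm : ∀ g, m • g ∈ H) {p : ℕ} (hp : p.Prime)
    (hpH : p ∣ H.index) : (p : ℤ) ∣ m := by
  rcases eq_or_ne m 0 with rfl | hm0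
  · exact dvd_zero _
  have hkill (q : G ⧸ H) : m • q = 0 := by
    induction q using QuotientAddGroup.induction_on with
    | H g => exact (QuotientAddGroup.eq_zero_iff _).2 (hm g)
  have : Finite (G ⧸ H) := AddCommGroup.finite_of_fg_isAddTorsion (G ⧸ H) fun q =>
    isOfFinAddOrder_iff_zsmul_eq_zero.2 ⟨m, hm0, hkill q⟩
  obtain ⟨q, hq⟩ := exists_prime_addOrderOf_dvd_card' (G := G ⧸ H) (hp := ⟨hp⟩) p
    (by rwa [← index_eq_card])
  exact hq ▸ addOrderOf_dvd_iff_zsmul_eq_zero.2 (hkill q)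

theorem minpoly_eq_map_of_monic_of_irreducible {L : Type*} [Field L] [Algebra ℚ L]
    {f : ℤ[X]} (hmonic : f.Monic) (hirr : Irreducible f) {x : L} (hx : aeval x f = 0) :
    minpoly ℚ x = f.map (algebraMap ℤ ℚ) :=
  (minpoly.eq_of_irreducible_of_monic
    (hmonic.irreducible_iff_irreducible_map_fraction_map.1 hirr)
    (by rwa [aeval_map_algebraMap]) (hmonic.map _)).symm

theorem discr_smul_mem_adjoin_of_powerBasis {K : Type*} [Field K] [NumberField K] {θ : 𝓞 K}
    (B : PowerBasis ℚ K) (hB : B.gen = θ) {d : ℤ} (hd : Algebra.discr ℚ B.basis = d)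
    (z : 𝓞 K) : d • z ∈ Algebra.adjoin ℤ {θ} := by
  have hK := Algebra.discr_mul_isIntegral_mem_adjoin ℚ (R := ℤ) (B := B)
    (hB ▸ RingOfIntegers.isIntegral_coe θ) (RingOfIntegers.isIntegral_coe z)
  have hmap : (Algebra.adjoin ℤ {θ}).map (IsScalarTower.toAlgHom ℤ (𝓞 K) K) =
      Algebra.adjoin ℤ {(θ : K)} := by
    rw [AlgHom.map_adjoin, Set.image_singleton]; rfl
  rw [hB, hd, Int.cast_smul_eq_zsmul, ← hmap] at hK
  obtain ⟨y, hy, hyz⟩ := hK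
  rwa [RingOfIntegers.coe_injective (hyz.trans (map_zsmul _ d z).symm)] at hy

theorem coeff_fInt (n k : ℕ) : (fInt n).coeff k = if k ≤ n then ((n ! / k ! : ℕ) : ℤ) else 0 := by
  simp [fInt]

theorem natDegree_fInt_le (n : ℕ) : (fInt n).natDegree ≤ n :=
  natDegree_le_iff_coeff_eq_zero.2 fun _ hk => by simp [coeff_fInt, hk.not_ge]

theorem coeff_fInt_self (n : ℕ) : (fInt n).coeff n = 1 := by
  simp [coeff_fInt, Nat.factorial_ne_zero]

theorem monic_fInt (n : ℕ) : (fInt n).Monic :=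
  monic_of_natDegree_le_of_coeff_eq_one n (natDegree_fInt_le n) (coeff_fInt_self n)

theorem natDegree_fInt (n : ℕ) : (fInt n).natDegree = n :=
  natDegree_eq_of_le_of_coeff_ne_zero (natDegree_fInt_le n) (by simp [coeff_fInt_self])

theorem coeff_fInt_zero (n : ℕ) : (fInt n).coeff 0 = n ! := by
  simp [coeff_fInt]

theorem derivative_fInt (n : ℕ) : derivative (fInt n) = fInt n - X ^ n := by
  ext k
  rw [coeff_derivative, coeff_sub, coeff_X_pow, coeff_fInt, coeff_fInt]
  rcases lt_trichotomy k n with hk | rfl | hk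
  · rw [if_pos (Nat.succ_le_of_lt hk), if_pos hk.le, if_neg hk.ne, sub_zero]
    exact_mod_cast Nat.factorial_div_succ_factorial_mul hk
  · simp [Nat.factorial_ne_zero]
  · simp [hk.not_ge, hk.ne', (hk.trans (Nat.lt_succ_self k)).not_ge]

theorem discr_eq_of_minpoly_eq_fInt {F L : Type*} [Field F] [CharZero F] [Field L] [Algebra F L]
    (B : PowerBasis F L) {n : ℕ} (hB : minpoly F B.gen = (fInt n).map (algebraMap ℤ F)) :
    Algebra.discr F B.basis = (-1) ^ (n * (n - 1) / 2) * (n ! : F) ^ n := by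
  have : FiniteDimensional F L := B.finite
  have hdim : B.dim = n := by
    rw [← B.natDegree_minpoly, hB, (monic_fInt n).natDegree_map, natDegree_fInt]
  have hroot : aeval B.gen (fInt n) = 0 := by
    rw [← aeval_map_algebraMap F, ← hB, minpoly.aeval]
  have hderiv : aeval B.gen (derivative (minpoly F B.gen)) = algebraMap F L (-1) * B.gen ^ n := by
    rw [hB, derivative_map, aeval_map_algebraMap, derivative_fInt, map_sub, hroot, map_pow,
      aeval_X, map_neg, map_one, zero_sub, neg_one_mul]
  have hnorm : Algebra.norm F B.gen = (-1) ^ n * n ! := by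
    rw [Algebra.PowerBasis.norm_gen_eq_coeff_zero_minpoly, hB, coeff_map, coeff_fInt_zero, hdim,
      map_natCast]
  have hfinrank : Module.finrank F L = n := B.finrank.trans hdim
  have hsign : ((-1 : F) ^ n) * ((-1) ^ n) ^ n = 1 := by
    rw [← pow_mul, ← pow_add, add_comm, ← mul_add_one, (Nat.even_mul_succ_self n).neg_one_pow]
  rw [Algebra.discr_powerBasis_eq_norm, hderiv, hfinrank, map_mul, map_pow,
    Algebra.norm_algebraMap, hnorm, hfinrank, mul_pow]
  linear_combination (-1) ^ (n * (n - 1) / 2) * (n ! : F) ^ n * hsign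

theorem not_dvd_index_of_not_dvd_factorial_general {K : Type*} [Field K] [NumberField K]
    (n p : ℕ) (hp : p.Prime) (θ : 𝓞 K)
    (hroot : Polynomial.aeval θ (fInt n) = 0)
    (hgen : Algebra.adjoin ℚ ({(θ : K)} : Set K) = ⊤)
    (hirr : Irreducible (fInt n))
    (hpn : ¬ p ∣ n.factorial) :
    ¬ p ∣ subIdx θ := by
  have hminpoly : minpoly ℚ (θ : K) = (fInt n).map (algebraMap ℤ ℚ) :=
    minpoly_eq_map_of_monic_of_irreducible (monic_fInt n) hirr
      (by rw [aeval_algebraMap_apply, hroot, map_zero])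
  let B := PowerBasis.ofAdjoinEqTop (IsIntegral.of_finite ℚ (θ : K)) hgen
  have hmem (z : 𝓞 K) : ((-1) ^ (n * (n - 1) / 2) * (n ! : ℤ) ^ n) • z ∈ Algebra.adjoin ℤ {θ} :=
    discr_smul_mem_adjoin_of_powerBasis B rfl
      (by push_cast; exact discr_eq_of_minpoly_eq_fInt B hminpoly) z
  intro hdvd
  have hpd := AddSubgroup.prime_dvd_of_dvd_index_of_zsmul_mem hmem hp hdvd
  rw [(isUnit_neg_one.pow _).dvd_mul_left] at hpd
  exact hpn (hp.dvd_of_dvd_pow (Int.natCast_dvd_natCast.1 (by exact_mod_cast hpd)))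

/-- If `p ∤ n!` then `p` does not divide the index `[ℤ_K : ℤ[θ]]`. -/
theorem not_dvd_index_of_not_dvd_factorial {K : Type*} [Field K] [NumberField K]
    (n p : ℕ) (hn : 0 < n) (hp : p.Prime) (θ : 𝓞 K)
    (hroot : Polynomial.aeval θ (fInt n) = 0)
    (hgen : Algebra.adjoin ℚ ({(θ : K)} : Set K) = ⊤)
    (hirr : Irreducible (fInt n))
    (hpn : ¬ p ∣ n.factorial) :
    ¬ p ∣ subIdx θ :=
  not_dvd_index_of_not_dvd_factorial_general n p hp θ hroot hgen hirr hpn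
end
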